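/- arXiv:1603.03682 — 2 statements merged into one kernel-verified Lean document; each statement's English description precedes it below -/
import Mathlib

section
/- If 0 < v < β/p₀, then there exists a unique p > 0 satisfying the optimality equation v(p+p₀)² = β(p+p₀) − (1+βp)·log(1+βp); equivalently, F(v,·) has a unique zero in (0,∞). -/
/-!
`F(v, ·)` is continuous on `[0, ∞)` with derivative `2v(p + p₀) + β log(1 + βp) > 0` for
`p > 0`, so it is strictly increasing there. It starts negative, `F(v, 0) = p₀(vp₀ − β) < 0`, and
is positive at `p = β/v`, so the intermediate value theorem gives exactly one zero.
-/

open Real Set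

theorem StrictMonoOn.existsUnique_eq_of_Ici {α δ : Type*} [ConditionallyCompleteLinearOrder α]
    [TopologicalSpace α] [OrderTopology α] [DenselyOrdered α] [LinearOrder δ]
    [TopologicalSpace δ] [OrderClosedTopology δ] {f : α → δ} {a b : α} {c : δ}
    (hf : ContinuousOn f (Ici a)) (hmono : StrictMonoOn f (Ici a)) (hab : a ≤ b)
    (ha : f a < c) (hb : c < f b) : ∃! x, a < x ∧ f x = c := by
  obtain ⟨x, ⟨hax, -⟩, hx⟩ :=
    intermediate_value_Ioo hab (hf.mono Icc_subset_Ici_self) ⟨ha, hb⟩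
  refine ⟨x, ⟨hax, hx⟩, fun y ⟨hay, hy⟩ => ?_⟩
  exact hmono.injOn (mem_Ici.mpr hay.le) (mem_Ici.mpr hax.le) (hy.trans hx.symm)

-- `optimalityResidual β p₀ v p` is `F(v, p)`.
noncomputable def optimalityResidual (β p₀ v p : ℝ) : ℝ :=
  v * (p + p₀) ^ 2 - β * (p + p₀) + (1 + β * p) * log (1 + β * p)

namespace optimalityResidual

variable {β p₀ v : ℝ}

theorem hasDerivAt {p : ℝ} (hp : 1 + β * p ≠ 0) :
    HasDerivAt (optimalityResidual β p₀ v) (2 * v * (p + p₀) + β * log (1 + β * p)) p := by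
  have hlin : HasDerivAt (fun x : ℝ => 1 + β * x) β p := by
    simpa using ((hasDerivAt_id p).const_mul β).const_add 1
  have hmulLog := (hasDerivAt_mul_log hp).comp p hlin
  have hsq : HasDerivAt (fun x : ℝ => (x + p₀) ^ 2) (2 * (p + p₀)) p := by
    simpa using (hasDerivAt_pow 2 (p + p₀)).comp_add_const p p₀
  have hshift : HasDerivAt (fun x : ℝ => β * (x + p₀)) β p := by
    simpa using ((hasDerivAt_id p).add_const p₀).const_mul β
  refine (((hsq.const_mul v).sub hshift).add hmulLog).congr_deriv ?_
  ring

theorem continuousOn (hβ : 0 ≤ β) : ContinuousOn (optimalityResidual β p₀ v) (Ici 0) :=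
  fun p hp => (hasDerivAt (by nlinarith [mem_Ici.mp hp])).continuousAt.continuousWithinAt

theorem strictMonoOn (hβ : 0 ≤ β) (hp₀ : 0 ≤ p₀) (hv : 0 < v) :
    StrictMonoOn (optimalityResidual β p₀ v) (Ici 0) := by
  refine strictMonoOn_of_deriv_pos (convex_Ici 0) (continuousOn hβ) fun p hp => ?_
  rw [interior_Ici, mem_Ioi] at hp
  rw [(hasDerivAt (by nlinarith)).deriv]
  have hlog : 0 ≤ log (1 + β * p) := log_nonneg (by nlinarith)
  have : 0 < v * (p + p₀) := mul_pos hv (by linarith)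
  nlinarith

theorem apply_zero : optimalityResidual β p₀ v 0 = p₀ * (v * p₀ - β) := by
  simp only [optimalityResidual, zero_add, mul_zero, add_zero, log_one]
  ring

-- The quadratic part alone is already `(β / v + p₀) v p₀ > 0` there.
theorem apply_div_pos (hβ : 0 ≤ β) (hp₀ : 0 < p₀) (hv : 0 < v) :
    0 < optimalityResidual β p₀ v (β / v) := by
  have hquad : v * (β / v + p₀) ^ 2 - β * (β / v + p₀) = (β / v + p₀) * (v * p₀) := by
    field_simp
    ring
  have hmulLog : 0 ≤ (1 + β * (β / v)) * log (1 + β * (β / v)) :=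
    mul_log_nonneg (le_add_of_nonneg_right (by positivity))
  have : 0 < (β / v + p₀) * (v * p₀) := by positivity
  unfold optimalityResidual
  linarith

end optimalityResidual

/-- If `0 < v < β/p₀`, then there exists a unique `p > 0` satisfying the
optimality equation `v(p+p₀)² = β(p+p₀) − (1+βp)·log(1+βp)`; equivalently `F(v,·)` has a
unique zero in `(0,∞)`. -/
theorem stmt_3 (β p₀ : ℝ) (hβ : 0 < β) (hp₀ : 0 < p₀) (v : ℝ) (hv : 0 < v)
    (hv' : v < β / p₀) :
    ∃! p : ℝ, 0 < p ∧
      v * (p + p₀) ^ 2 = β * (p + p₀) - (1 + β * p) * Real.log (1 + β * p) := by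
  have hneg : optimalityResidual β p₀ v 0 < 0 := by
    rw [optimalityResidual.apply_zero]
    nlinarith [(lt_div_iff₀ hp₀).mp hv']
  have hroot := (optimalityResidual.strictMonoOn hβ.le hp₀.le hv).existsUnique_eq_of_Ici
    (optimalityResidual.continuousOn hβ.le) (div_pos hβ hv).le hneg
    (optimalityResidual.apply_div_pos hβ.le hp₀ hv)
  refine (existsUnique_congr fun p => and_congr_right fun _ => ?_).mp hroot
  unfold optimalityResidual
  constructor <;> intro h <;> linarith
end

section
/- There exists a unique p* > 0 satisfying β(p*+p₀) = (1+βp*)·log(1+βp*), and this p* is the unique global maximizer on [0,∞) of the energy-efficiency function h(p) = log(1+βp)/(p+p₀): for every p ≥ 0 with p ≠ p*, h(p) < h(p*). -/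
/-!
Since `p ↦ log (1 + β p)` is strictly concave, away from `p*` it lies strictly below its
tangent line at `p*`. The stationarity equation says exactly that this tangent has slope
`h(p*) = log (1 + β p*) / (p* + p₀)`, so the tangent is the line `p ↦ h(p*) (p + p₀)`, and
dividing by `p + p₀` gives `h(p) < h(p*)`. A stationary point therefore is a strict global
maximizer of `h`, so there is at most one. One exists by the intermediate value theorem:
`(1 + β p) log (1 + β p) - β (p + p₀)` is `-β p₀ < 0` at `p = 0` and positive where
`1 + β p = exp (1 + β p₀)`.
-/

open Real

theorem Real.log_lt_log_add_sub_div {x y : ℝ} (hx : 0 < x) (hy : 0 < y) (hne : y ≠ x) :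
    log y < log x + (y - x) / x := by
  have h := log_lt_sub_one_of_pos (div_pos hy hx) (by rwa [ne_eq, div_eq_one_iff_eq hx.ne'])
  rw [log_div hy.ne' hx.ne'] at h
  rw [sub_div, div_self hx.ne']
  linarith

theorem log_one_add_mul_div_lt_of_stationary {β p₀ p q : ℝ} (hβ : β ≠ 0)
    (hp : 0 < 1 + β * p) (hq : 0 < 1 + β * q) (hpp₀ : 0 < p + p₀) (hqp₀ : 0 < q + p₀)
    (hstat : β * (q + p₀) = (1 + β * q) * log (1 + β * q)) (hne : p ≠ q) :
    log (1 + β * p) / (p + p₀) < log (1 + β * q) / (q + p₀) := by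
  set c := log (1 + β * q) / (q + p₀)
  have hslope : β / (1 + β * q) = c := by
    rw [div_eq_div_iff hq.ne' hqp₀.ne']
    linarith
  have hne' : 1 + β * p ≠ 1 + β * q := by simpa [hβ] using hne
  have hbelow : log (1 + β * p) < c * (p + p₀) :=
    calc log (1 + β * p) < log (1 + β * q) + ((1 + β * p) - (1 + β * q)) / (1 + β * q) :=
          log_lt_log_add_sub_div hq hp hne'
      _ = c * (q + p₀) + (p - q) * (β / (1 + β * q)) := by
          rw [div_mul_cancel₀ _ hqp₀.ne']
          ring
      _ = c * (p + p₀) := by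
          rw [hslope]
          ring
  rwa [div_lt_iff₀ hpp₀]

theorem exists_pos_stationary {β p₀ : ℝ} (hβ : 0 < β) (hp₀ : 0 < p₀) :
    ∃ q : ℝ, 0 < q ∧ β * (q + p₀) = (1 + β * q) * log (1 + β * q) := by
  set g : ℝ → ℝ := fun p ↦ (1 + β * p) * log (1 + β * p) - β * (p + p₀)
  have hg : Continuous g :=
    (continuous_mul_log.comp (continuous_const.add (continuous_const.mul continuous_id))).sub
      (continuous_const.mul (continuous_id.add continuous_const))
  set P := (exp (1 + β * p₀) - 1) / β
  have hexp : 1 + β * P = exp (1 + β * p₀) := by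
    rw [mul_div_cancel₀ _ hβ.ne', add_sub_cancel]
  have he : 1 < exp (1 + β * p₀) := one_lt_exp_iff.mpr (by positivity)
  have hP : 0 < P := div_pos (by linarith) hβ
  have hg0 : g 0 < 0 := by simpa [g] using mul_pos hβ hp₀
  have hgP : 0 < g P := by
    simp only [g, hexp, log_exp]
    nlinarith [mul_pos (mul_pos hβ hp₀) (sub_pos.2 he)]
  obtain ⟨q, hqP, hgq⟩ := intermediate_value_Icc hP.le hg.continuousOn ⟨hg0.le, hgP.le⟩
  refine ⟨q, hqP.1.lt_of_ne ?_, by simp only [g] at hgq; linarith⟩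
  rintro rfl
  exact hg0.ne hgq

/-- There exists a unique `p* > 0` satisfying
`β(p*+p₀) = (1+βp*)·log(1+βp*)`, and this `p*` is the unique global maximizer on `[0,∞)`
of the energy-efficiency function `h(p) = log(1+βp)/(p+p₀)`: for every `p ≥ 0` with
`p ≠ p*`, `h(p) < h(p*)`. -/
theorem stmt_7 (β p₀ : ℝ) (hβ : 0 < β) (hp₀ : 0 < p₀) :
    ∃ pstar : ℝ, 0 < pstar ∧
      β * (pstar + p₀) = (1 + β * pstar) * Real.log (1 + β * pstar) ∧
      (∀ p : ℝ, 0 < p → β * (p + p₀) = (1 + β * p) * Real.log (1 + β * p) → p = pstar) ∧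
      ∀ p : ℝ, 0 ≤ p → p ≠ pstar →
        Real.log (1 + β * p) / (p + p₀) < Real.log (1 + β * pstar) / (pstar + p₀) := by
  obtain ⟨q, hq, hstat⟩ := exists_pos_stationary hβ hp₀
  have hmax : ∀ p q : ℝ, 0 ≤ p → 0 ≤ q →
      β * (q + p₀) = (1 + β * q) * log (1 + β * q) → p ≠ q →
      log (1 + β * p) / (p + p₀) < log (1 + β * q) / (q + p₀) :=
    fun p q hp hq hstat hne ↦ log_one_add_mul_div_lt_of_stationary hβ.ne' (by positivity)
      (by positivity) (by positivity) (by positivity) hstat hne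
  refine ⟨q, hq, hstat, fun p hp hpstat ↦ ?_, fun p hp ↦ hmax p q hp hq.le hstat⟩
  by_contra hne
  exact lt_asymm (hmax p q hp.le hq.le hstat hne) (hmax q p hq.le hp.le hpstat (Ne.symm hne))
end
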